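/- arXiv:1004.3601 — 6 statements merged into one kernel-verified Lean document; each statement's English description precedes it below -/
import Mathlib

section
/- Every square complex matrix is similar to its Weyr canonical form; equivalently, the Jordan canonical matrix J(λ) = J_{n_1}(λ) ⊕ ... ⊕ J_{n_l}(λ) with a single eigenvalue λ is permutationally similar (i.e., similar via a permutation matrix) to the Weyr matrix J(λ)^# whose diagonal blocks are λI_{s_1}, ..., λI_{s_k} and whose superdiagonal blocks are [I_{s_{i+1}}; 0] of size s_i × s_{i+1}, where s_i is the number of indices j with n_j ≥ i. -/
open Matrix

/-- The n×n upper-triangular Jordan block with eigenvalue `lam`. -/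
def jordanBlock (n : ℕ) (lam : ℂ) : Matrix (Fin n) (Fin n) ℂ :=
  Matrix.of fun i j => if (i : ℕ) = j then lam else if (i : ℕ) + 1 = j then 1 else 0

/-- The Jordan matrix J(λ) = J_{n 0}(λ) ⊕ ... ⊕ J_{n (l-1)}(λ). -/
def jordanMatrix {l : ℕ} (n : Fin l → ℕ) (lam : ℂ) :
    Matrix ((i : Fin l) × Fin (n i)) ((i : Fin l) × Fin (n i)) ℂ :=
  Matrix.blockDiagonal' (fun i => jordanBlock (n i) lam)

/-- The Weyr matrix with diagonal blocks `lam • I_{s i}` and superdiagonal blocks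
`[I_{s (i+1)}; 0]` of size `s i × s (i+1)`. -/
def weyrMatrix {k : ℕ} (s : Fin k → ℕ) (lam : ℂ) :
    Matrix ((i : Fin k) × Fin (s i)) ((i : Fin k) × Fin (s i)) ℂ :=
  Matrix.of fun p q =>
    if (p.1 : ℕ) = q.1 ∧ (p.2 : ℕ) = q.2 then lam
    else if (p.1 : ℕ) + 1 = q.1 ∧ (p.2 : ℕ) = q.2 then 1 else 0

/-- The Weyr characteristic (conjugate partition): `weyrChar n i = #{j : n j ≥ i+1}`,
0-indexed (so `weyrChar n (i-1)` is `s_i` of the paper). -/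
def weyrChar {l : ℕ} (n : Fin l → ℕ) (i : ℕ) : ℕ :=
  (Finset.univ.filter (fun j : Fin l => i + 1 ≤ n j)).card

lemma lt_weyrChar_iff {l : ℕ} {n : Fin l → ℕ} (hmono : Antitone n) (i : ℕ) (j : Fin l) :
    (j : ℕ) < weyrChar n i ↔ i + 1 ≤ n j := by
  constructor
  · intro h
    by_contra hc
    push_neg at hc
    have hsub : (Finset.univ.filter (fun j' : Fin l => i + 1 ≤ n j')) ⊆ Finset.Iio j := by
      intro j' hj'
      simp only [Finset.mem_filter, Finset.mem_univ, true_and] at hj'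
      rw [Finset.mem_Iio]
      by_contra hge
      push_neg at hge
      exact absurd (le_trans hj' (hmono hge)) (not_le.mpr hc)
    have := Finset.card_le_card hsub
    rw [Fin.card_Iio] at this
    exact absurd h (not_lt.mpr this)
  · intro h
    have hsub : Finset.Iic j ⊆ (Finset.univ.filter (fun j' : Fin l => i + 1 ≤ n j')) := by
      intro j' hj'
      simp only [Finset.mem_filter, Finset.mem_univ, true_and]
      exact le_trans h (hmono (Finset.mem_Iic.mp hj'))
    have := Finset.card_le_card hsub
    rw [Fin.card_Iic] at this
    exact lt_of_lt_of_le (Nat.lt_succ_self _) this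

lemma weyrChar_le {l : ℕ} (n : Fin l → ℕ) (i : ℕ) : weyrChar n i ≤ l := by
  calc weyrChar n i ≤ Finset.univ.card := Finset.card_filter_le _ _
  _ = l := Finset.card_univ.trans (Fintype.card_fin l)

/-- the single-eigenvalue Jordan matrix is permutationally similar to its
Weyr canonical form: there is a bijection of indices (a permutation matrix) transforming
`jordanMatrix n lam` into the Weyr matrix of its Weyr characteristic. -/
theorem jordan_permutationally_similar_weyr {l : ℕ} (hl : 0 < l) (n : Fin l → ℕ)
    (hmono : Antitone n) (hpos : ∀ i, 1 ≤ n i) (lam : ℂ) :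
    ∃ e : ((i : Fin l) × Fin (n i)) ≃
        ((i : Fin (n ⟨0, hl⟩)) × Fin (weyrChar n (i : ℕ))),
      ∀ p q, jordanMatrix n lam p q =
        weyrMatrix (fun i : Fin (n ⟨0, hl⟩) => weyrChar n (i : ℕ)) lam (e p) (e q) := by
  refine ⟨⟨fun p => ⟨⟨(p.2 : ℕ), lt_of_lt_of_le p.2.2 (hmono (show (⟨0, hl⟩ : Fin l) ≤ p.1 from Nat.zero_le _))⟩,
      ⟨(p.1 : ℕ), (lt_weyrChar_iff hmono _ p.1).mpr p.2.2⟩⟩,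
    fun q => ⟨⟨(q.2 : ℕ), lt_of_lt_of_le q.2.2 (weyrChar_le n _)⟩,
      ⟨(q.1 : ℕ), (lt_weyrChar_iff hmono (q.1 : ℕ)
        ⟨(q.2 : ℕ), lt_of_lt_of_le q.2.2 (weyrChar_le n _)⟩).mp q.2.2⟩⟩, ?_, ?_⟩, ?_⟩
  · rintro ⟨j, i⟩; rfl
  · rintro ⟨i, j⟩; rfl
  · rintro ⟨j, i⟩ ⟨j', i'⟩
    simp only [jordanMatrix, weyrMatrix, Matrix.blockDiagonal'_apply, Equiv.coe_fn_mk,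
      Matrix.of_apply, jordanBlock]
    by_cases hj : j = j'
    · subst hj
      simp only [dif_pos rfl, Matrix.of_apply, eq_mpr_eq_cast]
      by_cases hi : (i : ℕ) = (i' : ℕ)
      · simp [hi]
      · by_cases hi2 : (i : ℕ) + 1 = (i' : ℕ) <;> simp [hi, hi2]
    · have hj' : (j : ℕ) ≠ (j' : ℕ) := fun h => hj (Fin.ext h)
      simp [dif_neg hj, hj']
end

section
/- If a complex matrix X commutes with the Weyr canonical matrix J(λ)^# of a single-eigenvalue Jordan matrix, then X is block upper triangular with respect to the partition of J(λ)^# into blocks of sizes s_1, s_2, ..., s_k given by the Weyr characteristic. -/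
open Matrix

/-- any matrix commuting with a Weyr canonical matrix (single eigenvalue)
is block upper triangular with respect to the Weyr block partition. -/
theorem commute_weyr_block_upper_triangular {k : ℕ} (s : Fin k → ℕ)
    (hmono : Antitone s) (hpos : ∀ i, 1 ≤ s i) (lam : ℂ)
    (X : Matrix ((i : Fin k) × Fin (s i)) ((i : Fin k) × Fin (s i)) ℂ)
    (hX : X * weyrMatrix s lam = weyrMatrix s lam * X) :
    ∀ p q : (i : Fin k) × Fin (s i), q.1 < p.1 → X p q = 0 := by
  classical
  set N : Matrix ((i : Fin k) × Fin (s i)) ((i : Fin k) × Fin (s i)) ℂ :=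
    Matrix.of (fun p q => if (p.1 : ℕ) + 1 = q.1 ∧ (p.2 : ℕ) = q.2 then 1 else 0) with hNdef
  have hsig : ∀ (p q : (i : Fin k) × Fin (s i)), (p.1 : ℕ) = q.1 → (p.2 : ℕ) = q.2 → p = q := by
    rintro ⟨pi, pv⟩ ⟨qi, qv⟩ h1 h2
    have h1' : pi = qi := Fin.ext h1
    cases h1'
    simp only [Sigma.mk.inj_iff, heq_eq_eq, true_and]
    exact Fin.ext h2
  have hW : weyrMatrix s lam = lam • (1 : Matrix _ _ ℂ) + N := by
    ext p q
    simp only [weyrMatrix, Matrix.of_apply, Matrix.add_apply, Matrix.smul_apply,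
      Matrix.one_apply, hNdef, smul_ite, smul_eq_mul, mul_one, mul_zero]
    by_cases h1 : (p.1 : ℕ) = q.1 ∧ (p.2 : ℕ) = q.2
    · have hpq : p = q := hsig p q h1.1 h1.2
      obtain ⟨ha, hb⟩ := h1
      have h2 : ¬((p.1 : ℕ) + 1 = q.1 ∧ (p.2 : ℕ) = q.2) := by
        rintro ⟨hc, -⟩; omega
      simp [ha, hb, hpq, h2]
    · have hpq : p ≠ q := by rintro rfl; exact h1 ⟨rfl, rfl⟩
      simp [h1, hpq]
  have hXN : X * N = N * X := by
    have h := hX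
    rw [hW, Matrix.mul_add, Matrix.add_mul] at h
    have h' : lam • X + X * N = lam • X + N * X := by
      simpa [Matrix.mul_smul, Matrix.smul_mul] using h
    exact add_left_cancel h'
  intro p q hlt
  obtain ⟨j, hj⟩ : ∃ j, (q.1 : ℕ) = j := ⟨q.1, rfl⟩
  induction j generalizing p q with
  | zero =>
    have hlt' : (q.1 : ℕ) < (p.1 : ℕ) := hlt
    have hp1 : 0 < (p.1 : ℕ) := by omega
    set i' : Fin k := ⟨(p.1 : ℕ) - 1, by omega⟩ with hi'
    have hle : i' ≤ p.1 := by rw [Fin.le_def]; show (p.1 : ℕ) - 1 ≤ p.1; omega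
    have hv : (p.2 : ℕ) < s i' := lt_of_lt_of_le p.2.2 (hmono hle)
    set p' : (i : Fin k) × Fin (s i) := ⟨i', ⟨p.2, hv⟩⟩ with hp'
    have hp'1 : (p'.1 : ℕ) = (p.1 : ℕ) - 1 := rfl
    have hp'2 : (p'.2 : ℕ) = (p.2 : ℕ) := rfl
    have hNX : (N * X) p' q = X p q := by
      rw [Matrix.mul_apply]
      rw [Finset.sum_eq_single p]
      · have hc : (p'.1 : ℕ) + 1 = p.1 ∧ (p'.2 : ℕ) = p.2 := ⟨by omega, hp'2⟩
        simp [hNdef, hc]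
      · intro r _ hr
        have hcr : ¬((p'.1 : ℕ) + 1 = r.1 ∧ (p'.2 : ℕ) = r.2) := by
          rintro ⟨h1, h2⟩
          exact hr (hsig r p (by omega) (by omega))
        simp [hNdef, hcr]
      · intro h; exact absurd (Finset.mem_univ p) h
    have hXNq : (X * N) p' q = 0 := by
      rw [Matrix.mul_apply]
      apply Finset.sum_eq_zero
      intro r _
      have hcr : ¬((r.1 : ℕ) + 1 = q.1 ∧ (r.2 : ℕ) = q.2) := by
        rintro ⟨h1, -⟩; omega
      simp [hNdef, hcr]
    rw [← hNX, ← hXN, hXNq]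
  | succ j ih =>
    have hlt' : (q.1 : ℕ) < (p.1 : ℕ) := hlt
    have hp1 : 0 < (p.1 : ℕ) := by omega
    set i' : Fin k := ⟨(p.1 : ℕ) - 1, by omega⟩ with hi'
    have hle : i' ≤ p.1 := by rw [Fin.le_def]; show (p.1 : ℕ) - 1 ≤ p.1; omega
    have hv : (p.2 : ℕ) < s i' := lt_of_lt_of_le p.2.2 (hmono hle)
    set p' : (i : Fin k) × Fin (s i) := ⟨i', ⟨p.2, hv⟩⟩ with hp'
    have hp'1 : (p'.1 : ℕ) = (p.1 : ℕ) - 1 := rfl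
    have hp'2 : (p'.2 : ℕ) = (p.2 : ℕ) := rfl
    set j' : Fin k := ⟨j, by omega⟩ with hj'
    have hleq : j' ≤ q.1 := by rw [Fin.le_def]; show j ≤ (q.1 : ℕ); omega
    have hvq : (q.2 : ℕ) < s j' := lt_of_lt_of_le q.2.2 (hmono hleq)
    set q' : (i : Fin k) × Fin (s i) := ⟨j', ⟨q.2, hvq⟩⟩ with hq'
    have hq'1 : (q'.1 : ℕ) = j := rfl
    have hq'2 : (q'.2 : ℕ) = (q.2 : ℕ) := rfl
    have hNX : (N * X) p' q = X p q := by
      rw [Matrix.mul_apply]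
      rw [Finset.sum_eq_single p]
      · have hc : (p'.1 : ℕ) + 1 = p.1 ∧ (p'.2 : ℕ) = p.2 := ⟨by omega, hp'2⟩
        simp [hNdef, hc]
      · intro r _ hr
        have hcr : ¬((p'.1 : ℕ) + 1 = r.1 ∧ (p'.2 : ℕ) = r.2) := by
          rintro ⟨h1, h2⟩
          exact hr (hsig r p (by omega) (by omega))
        simp [hNdef, hcr]
      · intro h; exact absurd (Finset.mem_univ p) h
    have hXNq : (X * N) p' q = X p' q' := by
      rw [Matrix.mul_apply]
      rw [Finset.sum_eq_single q']
      · have hc : (q'.1 : ℕ) + 1 = q.1 ∧ (q'.2 : ℕ) = q.2 := ⟨by omega, hq'2⟩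
        simp [hNdef, hc]
      · intro r _ hr
        have hcr : ¬((r.1 : ℕ) + 1 = q.1 ∧ (r.2 : ℕ) = q.2) := by
          rintro ⟨h1, h2⟩
          exact hr (hsig r q' (by omega) (by omega))
        simp [hNdef, hcr]
      · intro h; exact absurd (Finset.mem_univ q') h
    have hstep : X p q = X p' q' := by rw [← hNX, ← hXN, hXNq]
    rw [hstep]
    exact ih p' q' (by rw [Fin.lt_def]; omega) hq'1
end

section
/- The number of parameters in Arnold's miniversal deformation of a single-eigenvalue Jordan matrix J(λ) = J_{n_1}(λ) ⊕ ... ⊕ J_{n_l}(λ) equals Σ_{i,j} min(n_i, n_j), which equals the dimension of the centralizer of J(λ) in the algebra of matrices: dim{X : X J(λ) = J(λ) X} = Σ_{i,j} min(n_i,n_j). -/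
open Matrix

/-!
The centralizer of `J = ⊕ᵢ J_{nᵢ}(λ)` splits along the blocks into the spaces of rectangular
`nᵢ × nⱼ` matrices `X` with `X J_{nⱼ}(λ) = J_{nᵢ}(λ) X`. In each of these `λ` cancels, and the
relation for the nilpotent shifts says that `X` is an upper triangular Toeplitz matrix whose
diagonals vanish when they end in the last row before reaching the last column. The diagonals that
remain run from the top row to the last column, and for an `m × n` matrix there are `min m n`
of them.
-/

namespace LinearMap

variable {R ι : Type*} [Semiring R] {φ ψ : ι → Type*} [∀ i, AddCommMonoid (φ i)]
  [∀ i, Module R (φ i)] [∀ i, AddCommMonoid (ψ i)] [∀ i, Module R (ψ i)]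

def kerPiMapEquiv (f : ∀ i, φ i →ₗ[R] ψ i) : ker (piMap f) ≃ₗ[R] ∀ i, ker (f i) where
  toFun x i := ⟨x.1 i, congrFun (mem_ker.1 x.2) i⟩
  invFun y := ⟨fun i => (y i).1, funext fun i => (y i).2⟩
  map_add' _ _ := rfl
  map_smul' _ _ := rfl

end LinearMap

namespace Matrix

section SigmaBlocks

variable {R ι κ : Type*} [Semiring R] {d : ι → Type*} {e : κ → Type*}

def sigmaBlocksEquiv : Matrix (Σ i, d i) (Σ j, e j) R ≃ₗ[R] ∀ i j, Matrix (d i) (e j) R where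
  toFun X i j := of fun a b => X ⟨i, a⟩ ⟨j, b⟩
  invFun F := of fun p q => F p.1 q.1 p.2 q.2
  map_add' _ _ := rfl
  map_smul' _ _ := rfl

lemma sigmaBlocksEquiv_apply (X : Matrix (Σ i, d i) (Σ j, e j) R) (i : ι) (j : κ) (a : d i)
    (b : e j) : sigmaBlocksEquiv X i j a b = X ⟨i, a⟩ ⟨j, b⟩ := rfl

lemma sigmaBlocksEquiv_mul_blockDiagonal' [Fintype κ] [DecidableEq κ] [∀ j, Fintype (e j)]
    (X : Matrix (Σ i, d i) (Σ j, e j) R) (B : ∀ j, Matrix (e j) (e j) R) (i : ι) (j : κ) :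
    sigmaBlocksEquiv (X * blockDiagonal' B) i j = sigmaBlocksEquiv X i j * B j := by
  ext a b
  rw [sigmaBlocksEquiv_apply, mul_apply, ← Finset.univ_sigma_univ, Finset.sum_sigma,
    Fintype.sum_eq_single j fun j' hj' => ?_]
  · simp [mul_apply, sigmaBlocksEquiv_apply]
  · simp [blockDiagonal'_apply_ne _ _ _ hj']

lemma sigmaBlocksEquiv_blockDiagonal'_mul [Fintype ι] [DecidableEq ι] [∀ i, Fintype (d i)]
    (X : Matrix (Σ i, d i) (Σ j, e j) R) (A : ∀ i, Matrix (d i) (d i) R) (i : ι) (j : κ) :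
    sigmaBlocksEquiv (blockDiagonal' A * X) i j = A i * sigmaBlocksEquiv X i j := by
  ext a b
  rw [sigmaBlocksEquiv_apply, mul_apply, ← Finset.univ_sigma_univ, Finset.sum_sigma,
    Fintype.sum_eq_single i fun i' hi' => ?_]
  · simp [mul_apply, sigmaBlocksEquiv_apply]
  · simp [blockDiagonal'_apply_ne _ _ _ (Ne.symm hi')]

end SigmaBlocks

section Sylvester

variable {R : Type*} [CommRing R]

def sylvesterMap {m n : Type*} [Fintype m] [Fintype n] (A : Matrix m m R) (B : Matrix n n R) :
    Matrix m n R →ₗ[R] Matrix m n R :=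
  mulRightLinearMap m R B - mulLeftLinearMap n R A

@[simp]
lemma sylvesterMap_apply {m n : Type*} [Fintype m] [Fintype n] (A : Matrix m m R)
    (B : Matrix n n R) (X : Matrix m n R) : sylvesterMap A B X = X * B - A * X := rfl

lemma sylvesterMap_smul_one_add {m n : Type*} [Fintype m] [Fintype n] [DecidableEq m]
    [DecidableEq n] (c : R) (A : Matrix m m R) (B : Matrix n n R) :
    sylvesterMap (c • 1 + A) (c • 1 + B) = sylvesterMap A B := by
  ext X : 1
  simp only [sylvesterMap_apply, Matrix.mul_add, Matrix.add_mul, Matrix.mul_smul,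
    Matrix.smul_mul, Matrix.mul_one, Matrix.one_mul]
  abel

variable {ι κ : Type*} {d : ι → Type*} {e : κ → Type*} [Fintype ι] [Fintype κ] [DecidableEq ι]
  [DecidableEq κ] [∀ i, Fintype (d i)] [∀ j, Fintype (e j)]

lemma sigmaBlocksEquiv_sylvesterMap (A : ∀ i, Matrix (d i) (d i) R)
    (B : ∀ j, Matrix (e j) (e j) R) (X : Matrix (Σ i, d i) (Σ j, e j) R) :
    sigmaBlocksEquiv (sylvesterMap (blockDiagonal' A) (blockDiagonal' B) X) =
      LinearMap.piMap (fun i => LinearMap.piMap fun j => sylvesterMap (A i) (B j))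
        (sigmaBlocksEquiv X) := by
  ext i j : 2
  simp [sigmaBlocksEquiv_mul_blockDiagonal', sigmaBlocksEquiv_blockDiagonal'_mul]

lemma finrank_ker_sylvesterMap_blockDiagonal' {K : Type*} [Field K]
    (A : ∀ i, Matrix (d i) (d i) K) (B : ∀ j, Matrix (e j) (e j) K) :
    Module.finrank K (LinearMap.ker (sylvesterMap (blockDiagonal' A) (blockDiagonal' B))) =
      ∑ i, ∑ j, Module.finrank K (LinearMap.ker (sylvesterMap (A i) (B j))) := by
  have hker : LinearMap.ker (sylvesterMap (blockDiagonal' A) (blockDiagonal' B)) =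
      (LinearMap.ker (LinearMap.piMap fun i => LinearMap.piMap fun j =>
        sylvesterMap (A i) (B j))).comap (sigmaBlocksEquiv (R := K)).toLinearMap := by
    ext X
    simp only [Submodule.mem_comap, LinearMap.mem_ker, LinearEquiv.coe_coe,
      ← sigmaBlocksEquiv_sylvesterMap, LinearEquiv.map_eq_zero_iff]
  rw [hker, Submodule.comap_equiv_eq_map_symm, LinearEquiv.finrank_map_eq,
    (LinearMap.kerPiMapEquiv _).finrank_eq, Module.finrank_pi_fintype]
  simp_rw [(LinearMap.kerPiMapEquiv _).finrank_eq, Module.finrank_pi_fintype]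

end Sylvester

section ExtendByZero

variable {R : Type*} [Zero R] {m n : ℕ}

/-- Reading entries at natural-number indices lets the shift relations below be stated without
bounds proofs. -/
def extendByZero (X : Matrix (Fin m) (Fin n) R) (a b : ℕ) : R :=
  if h : a < m ∧ b < n then X ⟨a, h.1⟩ ⟨b, h.2⟩ else 0

@[simp]
lemma extendByZero_val (X : Matrix (Fin m) (Fin n) R) (a : Fin m) (b : Fin n) :
    extendByZero X a b = X a b := by
  simp [extendByZero]

lemma extendByZero_of_le_left (X : Matrix (Fin m) (Fin n) R) {a : ℕ} (ha : m ≤ a) (b : ℕ) :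
    extendByZero X a b = 0 := by
  simp [extendByZero]; omega

lemma extendByZero_of_le_right (X : Matrix (Fin m) (Fin n) R) (a : ℕ) {b : ℕ} (hb : n ≤ b) :
    extendByZero X a b = 0 := by
  simp [extendByZero]; omega

lemma ext_extendByZero {X Y : Matrix (Fin m) (Fin n) R}
    (h : ∀ a b, extendByZero X a b = extendByZero Y a b) : X = Y := by
  ext a b
  simpa using h a b

end ExtendByZero

section CornerToeplitz

variable {R : Type*} [Semiring R] {m n : ℕ}

/-- `a + n - (b + 1)` numbers the diagonal through `(a, b)` from the top-right corner; the
diagonals numbered below `min m n` are those running from the top row to the last column. -/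
def cornerToeplitz (m n : ℕ) : (Fin (min m n) → R) →ₗ[R] Matrix (Fin m) (Fin n) R where
  toFun c := of fun a b => if h : (a : ℕ) + n - (b + 1) < min m n then c ⟨_, h⟩ else 0
  map_add' c c' := by
    ext a b
    simp only [of_apply, add_apply, Pi.add_apply]
    split_ifs <;> simp
  map_smul' r c := by
    ext a b
    simp only [of_apply, smul_apply, Pi.smul_apply, RingHom.id_apply]
    split_ifs <;> simp

lemma extendByZero_cornerToeplitz (c : Fin (min m n) → R) (a b : ℕ) :
    extendByZero (cornerToeplitz m n c) a b =
      if h : a < m ∧ b < n ∧ a + n - (b + 1) < min m n then c ⟨_, h.2.2⟩ else 0 := by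
  unfold extendByZero
  by_cases hab : a < m ∧ b < n
  · simp [cornerToeplitz, hab]
  · rw [dif_neg hab, dif_neg (by tauto)]

lemma leftInverse_cornerToeplitz :
    Function.LeftInverse (fun X (k : Fin (min m n)) => extendByZero X 0 (n - 1 - k))
      (cornerToeplitz (R := R) m n) := by
  intro c
  funext k
  dsimp only
  have := k.isLt
  rw [extendByZero_cornerToeplitz, dif_pos (by omega)]
  exact congrArg c (Fin.ext (by simp; omega))

end CornerToeplitz

end Matrix

lemma jordanBlock_eq_smul_one_add (n : ℕ) (lam : ℂ) :
    jordanBlock n lam = lam • 1 + jordanBlock n 0 := by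
  ext i j
  by_cases h : i = j
  · simp [jordanBlock, h]
  · simp [jordanBlock, h, Fin.val_ne_of_ne h]

section Shift

variable {m n : ℕ}

lemma extendByZero_mul_jordanBlock_zero_zero (X : Matrix (Fin m) (Fin n) ℂ) (a : ℕ) :
    extendByZero (X * jordanBlock n 0) a 0 = 0 := by
  unfold extendByZero
  split_ifs
  · rw [mul_apply]
    exact Finset.sum_eq_zero fun c _ => by simp [jordanBlock]
  · rfl

lemma extendByZero_mul_jordanBlock_zero_succ (X : Matrix (Fin m) (Fin n) ℂ) (a : ℕ) {b : ℕ}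
    (hb : b + 1 < n) : extendByZero (X * jordanBlock n 0) a (b + 1) = extendByZero X a b := by
  unfold extendByZero
  by_cases ha : a < m
  · simp only [ha, hb, true_and, dif_pos, (by omega : b < n), mul_apply]
    rw [Fintype.sum_eq_single ⟨b, by omega⟩ fun c hc => ?_]
    · simp [jordanBlock]
    · simp [jordanBlock, Fin.ext_iff] at hc ⊢
      omega
  · simp [ha]

lemma extendByZero_jordanBlock_zero_mul (X : Matrix (Fin m) (Fin n) ℂ) (a b : ℕ) :
    extendByZero (jordanBlock m 0 * X) a b = extendByZero X (a + 1) b := by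
  unfold extendByZero
  by_cases hab : a < m ∧ b < n
  · rw [dif_pos hab, mul_apply]
    by_cases ha : a + 1 < m
    · rw [dif_pos ⟨ha, hab.2⟩, Fintype.sum_eq_single ⟨a + 1, ha⟩ fun c hc => ?_]
      · simp [jordanBlock]
      · simp [jordanBlock, Fin.ext_iff] at hc ⊢
        omega
    · rw [dif_neg (by omega)]
      refine Finset.sum_eq_zero fun c _ => ?_
      simp [jordanBlock]
      omega
  · rw [dif_neg hab, dif_neg (by omega)]

lemma mem_ker_sylvesterMap_jordanBlock_zero_iff {X : Matrix (Fin m) (Fin n) ℂ} :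
    X ∈ LinearMap.ker (sylvesterMap (jordanBlock m 0) (jordanBlock n 0)) ↔
      (∀ a, extendByZero X (a + 1) 0 = 0) ∧
        ∀ a b, b + 1 < n → extendByZero X a b = extendByZero X (a + 1) (b + 1) := by
  rw [LinearMap.mem_ker, sylvesterMap_apply, sub_eq_zero]
  constructor
  · intro h
    refine ⟨fun a => ?_, fun a b hb => ?_⟩
    · rw [← extendByZero_jordanBlock_zero_mul, ← h, extendByZero_mul_jordanBlock_zero_zero]
    · rw [← extendByZero_jordanBlock_zero_mul, ← h, extendByZero_mul_jordanBlock_zero_succ _ _ hb]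
  · rintro ⟨h0, hs⟩
    refine ext_extendByZero fun a b => ?_
    rw [extendByZero_jordanBlock_zero_mul]
    rcases b with _ | b
    · rw [extendByZero_mul_jordanBlock_zero_zero, h0]
    · by_cases hb : b + 1 < n
      · rw [extendByZero_mul_jordanBlock_zero_succ _ _ hb, hs a b hb]
      · rw [extendByZero_of_le_right _ _ (by omega), extendByZero_of_le_right _ _ (by omega)]

variable {X : Matrix (Fin m) (Fin n) ℂ}

lemma extendByZero_eq_of_mem_ker
    (hX : X ∈ LinearMap.ker (sylvesterMap (jordanBlock m 0) (jordanBlock n 0)))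
    {a b : ℕ} (ha : a < m) (hb : b < n) :
    extendByZero X a b = if a ≤ b then extendByZero X 0 (b - a) else 0 := by
  obtain ⟨h0, hs⟩ := mem_ker_sylvesterMap_jordanBlock_zero_iff.1 hX
  induction a generalizing b with
  | zero => simp
  | succ a ih =>
    rcases b with _ | b
    · simp [h0]
    · rw [← hs a b hb, ih (by omega) (by omega)]
      simp only [Nat.add_le_add_iff_right, Nat.add_sub_add_right]

lemma extendByZero_zero_eq_zero_of_mem_ker
    (hX : X ∈ LinearMap.ker (sylvesterMap (jordanBlock m 0) (jordanBlock n 0)))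
    {c : ℕ} (hc : c + m < n) : extendByZero X 0 c = 0 := by
  obtain _ | m := m
  · exact extendByZero_of_le_left _ le_rfl _
  obtain ⟨-, hs⟩ := mem_ker_sylvesterMap_jordanBlock_zero_iff.1 hX
  have hdiag := extendByZero_eq_of_mem_ker hX (a := m) (b := c + m) (by omega) (by omega)
  rw [if_pos (by omega), Nat.add_sub_cancel] at hdiag
  rw [← hdiag, hs m (c + m) (by omega), extendByZero_of_le_left _ le_rfl]

lemma cornerToeplitz_mem_ker (c : Fin (min m n) → ℂ) :
    cornerToeplitz m n c ∈ LinearMap.ker (sylvesterMap (jordanBlock m 0) (jordanBlock n 0)) := by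
  refine mem_ker_sylvesterMap_jordanBlock_zero_iff.2 ⟨fun a => ?_, fun a b hb => ?_⟩
  · rw [extendByZero_cornerToeplitz, dif_neg (by omega)]
  · simp only [extendByZero_cornerToeplitz]
    split_ifs <;> first | rfl | (exfalso; omega) | exact congrArg c (Fin.ext (by simp; omega))

lemma eq_cornerToeplitz_of_mem_ker
    (hX : X ∈ LinearMap.ker (sylvesterMap (jordanBlock m 0) (jordanBlock n 0))) :
    X = cornerToeplitz m n fun k => extendByZero X 0 (n - 1 - k) := by
  ext a b
  rw [← extendByZero_val X a b, extendByZero_eq_of_mem_ker hX a.isLt b.isLt]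
  simp only [cornerToeplitz, LinearMap.coe_mk, AddHom.coe_mk, of_apply]
  split_ifs
  · congr 1; omega
  · exact extendByZero_zero_eq_zero_of_mem_ker hX (by omega)
  · omega
  · rfl

lemma range_cornerToeplitz :
    LinearMap.range (cornerToeplitz (R := ℂ) m n) =
      LinearMap.ker (sylvesterMap (jordanBlock m 0) (jordanBlock n 0)) := by
  refine le_antisymm ?_ fun X hX => ⟨_, (eq_cornerToeplitz_of_mem_ker hX).symm⟩
  rintro _ ⟨c, rfl⟩
  exact cornerToeplitz_mem_ker c

end Shift

lemma finrank_ker_sylvesterMap_jordanBlock (m n : ℕ) (lam : ℂ) :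
    Module.finrank ℂ (LinearMap.ker (sylvesterMap (jordanBlock m lam) (jordanBlock n lam))) =
      min m n := by
  rw [jordanBlock_eq_smul_one_add m, jordanBlock_eq_smul_one_add n, sylvesterMap_smul_one_add,
    ← range_cornerToeplitz, LinearMap.finrank_range_of_inj leftInverse_cornerToeplitz.injective,
    Module.finrank_fin_fun]

theorem centralizer_dim_jordan_general {l : ℕ} (n : Fin l → ℕ) (lam : ℂ) :
    Module.finrank ℂ (LinearMap.ker
      (LinearMap.mulRight ℂ (jordanMatrix n lam) - LinearMap.mulLeft ℂ (jordanMatrix n lam))) =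
    ∑ i, ∑ j, min (n i) (n j) := by
  change Module.finrank ℂ (LinearMap.ker (sylvesterMap (jordanMatrix n lam) (jordanMatrix n lam)))
    = _
  rw [jordanMatrix, finrank_ker_sylvesterMap_blockDiagonal']
  simp only [finrank_ker_sylvesterMap_jordanBlock]

/-- the dimension of the centralizer of a single-eigenvalue Jordan matrix
(= the number of parameters of Arnold's miniversal deformation) is `Σ_{i,j} min(n_i,n_j)`. -/
theorem centralizer_dim_jordan {l : ℕ} (n : Fin l → ℕ) (hmono : Antitone n)
    (hpos : ∀ i, 1 ≤ n i) (lam : ℂ) :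
    Module.finrank ℂ (LinearMap.ker
      (LinearMap.mulRight ℂ (jordanMatrix n lam) - LinearMap.mulLeft ℂ (jordanMatrix n lam))) =
    ∑ i, ∑ j, min (n i) (n j) :=
  centralizer_dim_jordan_general n lam
end

section
/- A deformation A + B(α_1,...,α_k) of a square complex matrix A, holomorphic at 0 with B(0)=0, is versal if and only if every complex matrix M of the same size can be written as M = P + (AR − RA) for some matrix R and some matrix P in the linear span of the partial derivatives ∂B/∂α_i at 0; i.e., versality is equivalent to the tangent-space condition C^{n×n} = T + [A, C^{n×n}], where T is the span of the tangent vectors of the deformation. -/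
/-!
Let `Φ (α, R) = (1 + R)⁻¹ (A + B α) (1 + R) - A`. Versality says exactly that `Φ` has an
analytic local right inverse `E ↦ (h E, S E - 1)` through `0`, and the tangent-space condition
says exactly that the derivative `(c, R) ↦ B'(0) c + [A, R]` of `Φ` at `0` is surjective. An
analytic map has an analytic local right inverse iff its derivative is surjective: one direction
is the chain rule, the other is the analytic inverse function theorem applied after composing
with a linear right inverse of the derivative.
-/

open Matrix

noncomputable instance {m n : ℕ} : NormedAddCommGroup (Matrix (Fin m) (Fin n) ℂ) :=
  Matrix.frobeniusNormedAddCommGroup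

noncomputable instance {m n : ℕ} : NormedSpace ℂ (Matrix (Fin m) (Fin n) ℂ) :=
  Matrix.frobeniusNormedSpace

/-- A deformation `𝒜` of `A` (holomorphic family with `𝒜 0 = A`) is versal if every
nearby matrix `A + E` reduces to `𝒜 (h E)` by a similarity `S E` depending
holomorphically on `E` with `S 0 = I`. -/
def IsVersal {n k : ℕ} (A : Matrix (Fin n) (Fin n) ℂ)
    (𝒜 : (Fin k → ℂ) → Matrix (Fin n) (Fin n) ℂ) : Prop :=
  ∃ (S : Matrix (Fin n) (Fin n) ℂ → Matrix (Fin n) (Fin n) ℂ)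
    (h : Matrix (Fin n) (Fin n) ℂ → (Fin k → ℂ)),
    AnalyticAt ℂ S 0 ∧ AnalyticAt ℂ h 0 ∧ S 0 = 1 ∧ h 0 = 0 ∧
    ∀ᶠ E in nhds 0, 𝒜 (h E) * S E = S E * (A + E)

open Function Filter Topology

section LocalInverse

variable {𝕜 E F : Type*} [NontriviallyNormedField 𝕜]
  [NormedAddCommGroup E] [NormedSpace 𝕜 E] [NormedAddCommGroup F] [NormedSpace 𝕜 F]

theorem AnalyticAt.exists_analyticAt_localInverse [CompleteSpace E] {f : E → F}
    {f' : E ≃L[𝕜] F} {a : E} (hf : AnalyticAt 𝕜 f a) (hf' : fderiv 𝕜 f a = f') :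
    ∃ g : F → E, AnalyticAt 𝕜 g (f a) ∧ g (f a) = a ∧ ∀ᶠ y in 𝓝 (f a), f (g y) = y := by
  have hstrict : HasStrictFDerivAt f (f' : E →L[𝕜] F) a := hf' ▸ hf.hasStrictFDerivAt
  set φ := hstrict.toOpenPartialHomeomorph f
  have ha : a ∈ φ.source := hstrict.mem_toOpenPartialHomeomorph_source
  have hφ : ⇑φ = f := hstrict.toOpenPartialHomeomorph_coe
  refine ⟨φ.symm, ?_, ?_, ?_⟩
  · simpa only [hφ] using φ.analyticAt_symm' ha (hφ ▸ hf) (hφ ▸ hf')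
  · simpa only [hφ] using φ.left_inv ha
  · filter_upwards [φ.open_target.mem_nhds (hφ ▸ φ.map_source ha)] with y hy
    simpa only [hφ] using φ.right_inv hy

theorem surjective_fderiv_of_eventually_rightInverse {f : E → F} {g : F → E} {b : F}
    (hf : DifferentiableAt 𝕜 f (g b)) (hg : DifferentiableAt 𝕜 g b)
    (hfg : ∀ᶠ y in 𝓝 b, f (g y) = y) : Surjective (fderiv 𝕜 f (g b)) := by
  have hcomp : fderiv 𝕜 (f ∘ g) b = (fderiv 𝕜 f (g b)).comp (fderiv 𝕜 g b) :=
    fderiv_comp b hf hg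
  rw [Filter.EventuallyEq.fderiv_eq (f₁ := f ∘ g) (f := id) hfg, fderiv_id] at hcomp
  exact fun y => ⟨fderiv 𝕜 g b y, by simpa using congr($hcomp.symm y)⟩

theorem AnalyticAt.exists_analyticAt_rightInverse [CompleteSpace 𝕜]
    [FiniteDimensional 𝕜 F] {f : E → F} {a : E} (hf : AnalyticAt 𝕜 f a)
    (hsurj : Surjective (fderiv 𝕜 f a)) :
    ∃ g : F → E, AnalyticAt 𝕜 g (f a) ∧ g (f a) = a ∧ ∀ᶠ y in 𝓝 (f a), f (g y) = y := by
  have : CompleteSpace F := FiniteDimensional.complete 𝕜 F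
  have hr := ContinuousLinearMap.HasRightInverse.of_surjective_of_finiteDimensional hsurj
  set r := hr.rightInverse
  have hfr : AnalyticAt 𝕜 (fun y => f (a + r y)) 0 :=
    hf.comp_of_eq (analyticAt_const.add (r.analyticAt 0)) (by simp)
  have hfr' : fderiv 𝕜 (fun y => f (a + r y)) 0 = ContinuousLinearEquiv.refl 𝕜 F := by
    have hd : HasFDerivAt (fun y => f (a + r y)) ((fderiv 𝕜 f a).comp r) 0 :=
      HasFDerivAt.comp (f := fun y => a + r y) 0 (by simpa using hf.differentiableAt.hasFDerivAt)
        (r.hasFDerivAt.const_add a)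
    ext1 y
    simpa [hd.fderiv] using hr.rightInverse_rightInverse y
  obtain ⟨ψ, hψ, hψ0, hfψ⟩ := hfr.exists_analyticAt_localInverse hfr'
  simp only [map_zero, add_zero] at hψ hψ0 hfψ
  exact ⟨fun y => a + r (ψ y), analyticAt_const.add ((r.analyticAt _).comp hψ),
    by simp [hψ0], hfψ⟩

theorem AnalyticAt.exists_analyticAt_rightInverse_iff [CompleteSpace 𝕜]
    [FiniteDimensional 𝕜 F] {f : E → F} {a : E} (hf : AnalyticAt 𝕜 f a) :
    (∃ g : F → E, AnalyticAt 𝕜 g (f a) ∧ g (f a) = a ∧ ∀ᶠ y in 𝓝 (f a), f (g y) = y) ↔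
      Surjective (fderiv 𝕜 f a) := by
  refine ⟨fun ⟨g, hg, hga, hfg⟩ => ?_, hf.exists_analyticAt_rightInverse⟩
  have hf' : DifferentiableAt 𝕜 f (g (f a)) := by rw [hga]; exact hf.differentiableAt
  simpa only [hga] using surjective_fderiv_of_eventually_rightInverse hf' hg.differentiableAt hfg

end LocalInverse

section ConjMap

variable {𝕜 𝔸 P : Type*} [NontriviallyNormedField 𝕜] [NormedRing 𝔸] [NormedAlgebra 𝕜 𝔸]
  [NormedAddCommGroup P] [NormedSpace 𝕜 P]

/-- `Ring.inverse` is `0` off the units, but only the germ at `p.2 = 0`, where `1 + p.2` is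
invertible, ever matters. -/
noncomputable def conjMap (a : 𝔸) (𝒜 : P → 𝔸) (p : P × 𝔸) : 𝔸 :=
  Ring.inverse (1 + p.2) * 𝒜 p.1 * (1 + p.2) - a

theorem conjMap_zero {a : 𝔸} {𝒜 : P → 𝔸} (h𝒜 : 𝒜 0 = a) : conjMap a 𝒜 0 = 0 := by
  simp [conjMap, h𝒜]

variable [HasSummableGeomSeries 𝔸]

theorem analyticAt_conjMap (a : 𝔸) {𝒜 : P → 𝔸} (h𝒜 : AnalyticAt 𝕜 𝒜 0) :
    AnalyticAt 𝕜 (conjMap a 𝒜) 0 := by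
  have hS : AnalyticAt 𝕜 (fun p : P × 𝔸 => 1 + p.2) 0 := analyticAt_const.add analyticAt_snd
  have hinv : AnalyticAt 𝕜 (fun p : P × 𝔸 => Ring.inverse (1 + p.2)) 0 :=
    (analyticAt_inverse (𝕜 := 𝕜) (1 : 𝔸ˣ)).comp_of_eq hS (by simp)
  exact ((hinv.mul (h𝒜.comp_of_eq analyticAt_fst rfl)).mul hS).sub analyticAt_const

theorem fderiv_conjMap_apply (a : 𝔸) {𝒜 : P → 𝔸} (h𝒜 : DifferentiableAt 𝕜 𝒜 0) (p : P × 𝔸) :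
    fderiv 𝕜 (conjMap a 𝒜) 0 p = fderiv 𝕜 𝒜 0 p.1 + (𝒜 0 * p.2 - p.2 * 𝒜 0) := by
  have hS : HasFDerivAt (fun p : P × 𝔸 => 1 + p.2) (ContinuousLinearMap.snd 𝕜 P 𝔸) 0 :=
    hasFDerivAt_snd.const_add 1
  have hinv : HasFDerivAt (fun p : P × 𝔸 => Ring.inverse (1 + p.2))
      ((-ContinuousLinearMap.mulLeftRight 𝕜 𝔸 1 1).comp (ContinuousLinearMap.snd 𝕜 P 𝔸)) 0 := by
    refine HasFDerivAt.comp (g := Ring.inverse) 0 ?_ hS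
    simpa using hasFDerivAt_ringInverse (𝕜 := 𝕜) (1 : 𝔸ˣ)
  have h𝒜' : HasFDerivAt (fun p : P × 𝔸 => 𝒜 p.1)
      ((fderiv 𝕜 𝒜 0).comp (ContinuousLinearMap.fst 𝕜 P 𝔸)) 0 :=
    HasFDerivAt.comp (g := 𝒜) 0 h𝒜.hasFDerivAt hasFDerivAt_fst
  have hΦ : HasFDerivAt (conjMap a 𝒜) _ 0 := ((hinv.mul' h𝒜').mul' hS).sub_const a
  rw [hΦ.fderiv]
  simp only [Pi.mul_apply, Prod.snd_zero, add_zero, Ring.inverse_one, Prod.fst_zero, one_mul,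
    MulOpposite.op_one, one_smul, ContinuousLinearMap.neg_comp, smul_neg, smul_add,
    _root_.add_apply, _root_.smul_apply, ContinuousLinearMap.coe_snd', smul_eq_mul,
    ContinuousLinearMap.comp_apply, ContinuousLinearMap.coe_fst', _root_.neg_apply,
    ContinuousLinearMap.mulLeftRight_apply, mul_one, MulOpposite.smul_eq_mul_unop,
    MulOpposite.unop_op]
  abel

end ConjMap

theorem Submodule.mem_span_range_apply_single_iff {R M ι F : Type*} [Semiring R] [AddCommMonoid M]
    [Module R M] [Fintype ι] [DecidableEq ι] [FunLike F (ι → R) M] [LinearMapClass F R (ι → R) M]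
    (L : F) {x : M} :
    x ∈ Submodule.span R (Set.range fun i => L (Pi.single i 1)) ↔ ∃ c, L c = x := by
  simp_rw [Submodule.mem_span_range_iff_exists_fun, ← map_smul, ← map_sum, ← Pi.single_smul',
    smul_eq_mul, mul_one, Finset.univ_sum_single]

attribute [local instance] Matrix.frobeniusNormedRing Matrix.frobeniusNormedAlgebra

theorem isVersal_iff_exists_rightInverse_conjMap {n k : ℕ} (A : Matrix (Fin n) (Fin n) ℂ)
    (𝒜 : (Fin k → ℂ) → Matrix (Fin n) (Fin n) ℂ) :
    IsVersal A 𝒜 ↔ ∃ σ : Matrix (Fin n) (Fin n) ℂ → (Fin k → ℂ) × Matrix (Fin n) (Fin n) ℂ,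
      AnalyticAt ℂ σ 0 ∧ σ 0 = 0 ∧ ∀ᶠ E in 𝓝 0, conjMap A 𝒜 (σ E) = E := by
  have eventually_isUnit {S : Matrix (Fin n) (Fin n) ℂ → Matrix (Fin n) (Fin n) ℂ}
      (hS : ContinuousAt S 0) (hS0 : S 0 = 1) : ∀ᶠ E in 𝓝 0, IsUnit (S E) :=
    hS.eventually_mem (Units.isOpen.mem_nhds (by simp [hS0]))
  constructor
  · rintro ⟨S, h, hS, hh, hS0, hh0, hconj⟩
    refine ⟨fun E => (h E, S E - 1), hh.prod (hS.sub analyticAt_const), by simp [hS0, hh0], ?_⟩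
    filter_upwards [hconj, eventually_isUnit hS.continuousAt hS0] with E hE hu
    simp only [conjMap, add_sub_cancel, mul_assoc, hE, Ring.inverse_mul_cancel_left _ _ hu]
    abel
  · rintro ⟨σ, hσ, hσ0, hσ_inv⟩
    have hS : AnalyticAt ℂ (fun E => 1 + (σ E).2) 0 :=
      analyticAt_const.add (analyticAt_snd.comp hσ)
    refine ⟨fun E => 1 + (σ E).2, fun E => (σ E).1, hS, analyticAt_fst.comp hσ,
      by simp [hσ0], by simp [hσ0], ?_⟩
    filter_upwards [hσ_inv, eventually_isUnit hS.continuousAt (by simp [hσ0])] with E hE hu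
    rw [conjMap, sub_eq_iff_eq_add'] at hE
    rw [← hE, mul_assoc (Ring.inverse _), Ring.mul_inverse_cancel_left _ _ hu]

/-- Arnold's tangent-space criterion: the deformation `A + B α` (with `B`
holomorphic at `0`, `B 0 = 0`) is versal iff every matrix `M` can be written as
`P + (AR − RA)` with `P` in the span of the partial derivatives `∂B/∂α_i (0)`. -/
theorem versal_iff_tangent_space {n k : ℕ} (A : Matrix (Fin n) (Fin n) ℂ)
    (B : (Fin k → ℂ) → Matrix (Fin n) (Fin n) ℂ)
    (hB : AnalyticAt ℂ B 0) (hB0 : B 0 = 0) :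
    IsVersal A (fun α => A + B α) ↔
      ∀ M : Matrix (Fin n) (Fin n) ℂ,
        ∃ R P : Matrix (Fin n) (Fin n) ℂ,
          P ∈ Submodule.span ℂ
            (Set.range fun i : Fin k => fderiv ℂ B 0 (Pi.single i 1)) ∧
          M = P + (A * R - R * A) := by
  have h𝒜 : AnalyticAt ℂ (fun α => A + B α) 0 := analyticAt_const.add hB
  have hsurj := (analyticAt_conjMap A h𝒜).exists_analyticAt_rightInverse_iff
  rw [conjMap_zero (by simp [hB0])] at hsurj
  refine (isVersal_iff_exists_rightInverse_conjMap A _).trans (hsurj.trans ?_)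
  simp only [Surjective, fderiv_conjMap_apply A h𝒜.differentiableAt,
    fderiv_const_add, hB0, add_zero, Submodule.mem_span_range_apply_single_iff]
  refine forall_congr' fun M => ⟨fun ⟨⟨c, R⟩, hM⟩ => ⟨R, _, ⟨c, rfl⟩, hM.symm⟩, ?_⟩
  rintro ⟨R, _, ⟨c, rfl⟩, hM⟩
  exact ⟨(c, R), hM.symm⟩
end

section
/- For the pair (F_p, G_p^T) with F_p, G_p of size p×(p−1), and any p×(p−1) matrix T whose only nonzero row is the last row, with entries α_1,...,α_{p−1}, the pair (T, 0) is congruent modulo the tangent space {(F_p R − S F_p, G_p^T S − R G_p^T) : S a p×p matrix, R a (p−1)×(p−1) matrix} to a pair of the form (0, T'') with T'' having nonzero entries only in its first column. -/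
open Matrix

/-- `F_p`: the p×(p−1) matrix with ones on the main diagonal. -/
def Fmat (p : ℕ) : Matrix (Fin p) (Fin (p - 1)) ℂ :=
  Matrix.of fun i j => if (i : ℕ) = j then 1 else 0

/-- `G_p`: the p×(p−1) matrix with ones on the subdiagonal. -/
def Gmat (p : ℕ) : Matrix (Fin p) (Fin (p - 1)) ℂ :=
  Matrix.of fun i j => if (i : ℕ) = (j : ℕ) + 1 then 1 else 0

lemma mulF {p : ℕ} (S : Matrix (Fin p) (Fin p) ℂ) (i : Fin p) (j : Fin (p-1)) :
    (S * Fmat p) i j = S i ⟨j, by omega⟩ := by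
  rw [Matrix.mul_apply]
  rw [Finset.sum_eq_single (⟨j, by omega⟩ : Fin p)]
  · simp [Fmat]
  · intro k _ hk
    simp only [Fmat, Matrix.of_apply]
    rw [if_neg, mul_zero]
    intro h; apply hk; exact Fin.ext (by simpa using h)
  · simp

lemma Fmul {p : ℕ} (R : Matrix (Fin (p-1)) (Fin (p-1)) ℂ) (i : Fin p) (j : Fin (p-1)) :
    (Fmat p * R) i j = if h : (i : ℕ) < p - 1 then R ⟨i, h⟩ j else 0 := by
  rw [Matrix.mul_apply]
  split
  · next h =>
    rw [Finset.sum_eq_single (⟨i, h⟩ : Fin (p-1))]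
    · simp [Fmat]
    · intro k _ hk
      simp only [Fmat, Matrix.of_apply]
      rw [if_neg, zero_mul]
      intro h'; apply hk; exact Fin.ext (by simpa using h'.symm)
    · simp
  · next h =>
    apply Finset.sum_eq_zero
    intro k _
    simp only [Fmat, Matrix.of_apply]
    rw [if_neg, zero_mul]
    omega

lemma Gtmul {p : ℕ} (S : Matrix (Fin p) (Fin p) ℂ) (j : Fin (p-1)) (i : Fin p) :
    ((Gmat p)ᵀ * S) j i = S ⟨(j : ℕ) + 1, by omega⟩ i := by
  rw [Matrix.mul_apply]
  rw [Finset.sum_eq_single (⟨(j : ℕ) + 1, by omega⟩ : Fin p)]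
  · simp [Gmat]
  · intro k _ hk
    simp only [Gmat, Matrix.transpose_apply, Matrix.of_apply]
    rw [if_neg, zero_mul]
    intro h; apply hk; exact Fin.ext (by simpa using h)
  · simp

lemma mulGt {p : ℕ} (R : Matrix (Fin (p-1)) (Fin (p-1)) ℂ) (j : Fin (p-1)) (i : Fin p) :
    (R * (Gmat p)ᵀ) j i = if h : 0 < (i : ℕ) then R j ⟨(i : ℕ) - 1, by omega⟩ else 0 := by
  rw [Matrix.mul_apply]
  split
  · next h =>
    rw [Finset.sum_eq_single (⟨(i : ℕ) - 1, by omega⟩ : Fin (p-1))]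
    · simp only [Gmat, Matrix.transpose_apply, Matrix.of_apply]
      rw [if_pos (by omega), mul_one]
    · intro k _ hk
      simp only [Gmat, Matrix.transpose_apply, Matrix.of_apply]
      rw [if_neg, mul_zero]
      intro h'; apply hk; exact Fin.ext (by simp; omega)
    · simp
  · next h =>
    apply Finset.sum_eq_zero
    intro k _
    simp only [Gmat, Matrix.transpose_apply, Matrix.of_apply]
    rw [if_neg (by omega), mul_zero]

def Smat {p : ℕ} (T : Matrix (Fin p) (Fin (p - 1)) ℂ) : Matrix (Fin p) (Fin p) ℂ :=
  Matrix.of fun i k =>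
    if h : (k : ℕ) < (i : ℕ) then
      T ⟨p - 1, by omega⟩ ⟨(k : ℕ) + (p - 1) - (i : ℕ), by omega⟩
    else 0

lemma Smat_congr {p : ℕ} (T : Matrix (Fin p) (Fin (p - 1)) ℂ) (i i' k k' : Fin p)
    (h1 : ((k : ℕ) < i) ↔ ((k' : ℕ) < i')) (h2 : (i : ℕ) - k = (i' : ℕ) - k') :
    Smat T i k = Smat T i' k' := by
  unfold Smat
  simp only [Matrix.of_apply]
  by_cases h : (k : ℕ) < i
  · rw [dif_pos h, dif_pos (h1.mp h)]
    congr 1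
    exact Fin.ext (by simp; omega)
  · rw [dif_neg h, dif_neg (fun hh => h (h1.mpr hh))]

/-- Case 1 in the proof of Theorem 4.2: for the pair `(F_p, G_pᵀ)`,
any pair `(T, 0)` with `T` nonzero only in its last row is congruent, modulo the
tangent space `(F_p R − S F_p, G_pᵀ S − R G_pᵀ)`, to a pair `(0, T'')` with `T''`
nonzero only in its first column. -/
theorem case1_move_parameters (p : ℕ) (hp : 1 ≤ p)
    (T : Matrix (Fin p) (Fin (p - 1)) ℂ)
    (hT : ∀ (i : Fin p) (j : Fin (p - 1)), (i : ℕ) + 1 ≠ p → T i j = 0) :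
    ∃ (S : Matrix (Fin p) (Fin p) ℂ) (R : Matrix (Fin (p - 1)) (Fin (p - 1)) ℂ)
      (T'' : Matrix (Fin (p - 1)) (Fin p) ℂ),
      (∀ (i : Fin (p - 1)) (j : Fin p), (j : ℕ) ≠ 0 → T'' i j = 0) ∧
      T + (Fmat p * R - S * Fmat p) = 0 ∧
      (0 : Matrix (Fin (p - 1)) (Fin p) ℂ) + ((Gmat p)ᵀ * S - R * (Gmat p)ᵀ) = T'' := by
  refine ⟨Smat T,
    Matrix.of (fun j k => Smat T ⟨(j : ℕ) + 1, by omega⟩ ⟨(k : ℕ) + 1, by omega⟩),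
    Matrix.of (fun j i => if (i : ℕ) = 0 then Smat T ⟨(j : ℕ) + 1, by omega⟩ ⟨0, by omega⟩ else 0),
    ?_, ?_, ?_⟩
  · intro i j hj
    simp [hj]
  · ext i j
    simp only [Matrix.add_apply, Matrix.sub_apply, Fmul, mulF, Matrix.zero_apply,
      Matrix.of_apply]
    by_cases h : (i : ℕ) < p - 1
    · rw [dif_pos h, hT i j (by omega)]
      have : Smat T (⟨(i : ℕ) + 1, by omega⟩ : Fin p) ⟨(j : ℕ) + 1, by omega⟩
          = Smat T i ⟨j, by omega⟩ :=
        Smat_congr T _ _ _ _ (by simp) (by simp)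
      rw [this]; ring
    · rw [dif_neg h]
      have hi : (i : ℕ) = p - 1 := by omega
      have : Smat T i ⟨j, by omega⟩ = T i j := by
        unfold Smat
        simp only [Matrix.of_apply]
        rw [dif_pos (by omega)]
        congr 1
        · exact Fin.ext (by simp [hi])
        · exact Fin.ext (by simp; omega)
      rw [this]; ring
  · ext j i
    simp only [Matrix.add_apply, Matrix.sub_apply, Gtmul, mulGt, Matrix.zero_apply,
      Matrix.of_apply, zero_add]
    by_cases h : (i : ℕ) = 0
    · rw [if_pos h, dif_neg (by omega)]
      have : Smat T (⟨(j : ℕ) + 1, by omega⟩ : Fin p) i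
          = Smat T ⟨(j : ℕ) + 1, by omega⟩ ⟨0, by omega⟩ :=
        Smat_congr T _ _ _ _ (by simp; omega) (by simp; omega)
      rw [this]; ring
    · rw [if_neg h, dif_pos (by omega)]
      have : Smat T (⟨(j : ℕ) + 1, by omega⟩ : Fin p) ⟨((i : ℕ) - 1) + 1, by omega⟩
          = Smat T ⟨(j : ℕ) + 1, by omega⟩ i :=
        Smat_congr T _ _ _ _ (by simp; omega) (by simp; omega)
      rw [this]; ring
end

section
/- Let (C,D) with C = C_1 ⊕ ... ⊕ C_t and D = D_1 ⊕ ... ⊕ D_t be a block-diagonal pair, and let (P,Q) be a conformally partitioned parameter pair. Then the simple deformation (C+P, D+Q) satisfies the versality condition for contragredient equivalence if and only if for each pair of indices (i,j) and every pair (M_{ij}, N_{ij}) of the size of the (i,j) blocks there exist matrices S_{ij}, R_{ij} and a specialization (P_{ij}, Q_{ij}) of the parameter blocks such that (M_{ij}, N_{ij}) + (C_i R_{ij} − S_{ij} C_j, D_i S_{ij} − R_{ij} D_j) = (P_{ij}, Q_{ij}). -/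
open Matrix

/-!
Multiplying by a block-diagonal matrix acts block by block: the `(i, j)` block of
`blockDiagonal' C * R - S * blockDiagonal' C` is `C i * R_ij - S_ij * C j`. Hence the `(i, j)`
block of `(M, N) + (CR - SC, DS - RD)` only involves the `(i, j)` blocks of `M`, `N`, `S`, `R`,
and since the support condition on `(P, Q)` is entrywise, it splits into blocks as well.
-/

namespace Matrix

variable {ι R : Type*} {α β γ : ι → Type*}

def sigmaBlock (X : Matrix (Σ i, α i) (Σ j, β j) R) (i j : ι) : Matrix (α i) (β j) R :=
  fun a b => X ⟨i, a⟩ ⟨j, b⟩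

def ofSigmaBlocks (X : ∀ i j, Matrix (α i) (β j) R) : Matrix (Σ i, α i) (Σ j, β j) R :=
  fun p q => X p.1 q.1 p.2 q.2

@[simp]
theorem sigmaBlock_ofSigmaBlocks (X : ∀ i j, Matrix (α i) (β j) R) (i j : ι) :
    (ofSigmaBlocks X).sigmaBlock i j = X i j :=
  rfl

theorem ext_sigmaBlock {X Y : Matrix (Σ i, α i) (Σ j, β j) R}
    (h : ∀ i j, X.sigmaBlock i j = Y.sigmaBlock i j) : X = Y := by
  ext ⟨i, a⟩ ⟨j, b⟩
  exact congrFun (congrFun (h i j) a) b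

theorem exists_sigmaBlock_eq [DecidableEq ι] [Zero R] (i j : ι) (Y : Matrix (α i) (β j) R) :
    ∃ X : Matrix (Σ i, α i) (Σ j, β j) R, X.sigmaBlock i j = Y :=
  ⟨ofSigmaBlocks fun k l =>
    (Pi.single (i, j) Y : ∀ kl : ι × ι, Matrix (α kl.1) (β kl.2) R) (k, l), by simp⟩

@[simp]
theorem sigmaBlock_add [Add R] (X Y : Matrix (Σ i, α i) (Σ j, β j) R) (i j : ι) :
    (X + Y).sigmaBlock i j = X.sigmaBlock i j + Y.sigmaBlock i j :=
  rfl

@[simp]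
theorem sigmaBlock_sub [Sub R] (X Y : Matrix (Σ i, α i) (Σ j, β j) R) (i j : ι) :
    (X - Y).sigmaBlock i j = X.sigmaBlock i j - Y.sigmaBlock i j :=
  rfl

variable [Fintype ι] [DecidableEq ι] [NonUnitalNonAssocSemiring R]

@[simp]
theorem sigmaBlock_blockDiagonal'_mul [∀ i, Fintype (β i)] (C : ∀ i, Matrix (α i) (β i) R)
    (X : Matrix (Σ i, β i) (Σ j, γ j) R) (i j : ι) :
    (blockDiagonal' C * X).sigmaBlock i j = C i * X.sigmaBlock i j := by
  ext a b
  simp [sigmaBlock, mul_apply, Fintype.sum_sigma, blockDiagonal'_apply, Finset.sum_dite_eq]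

@[simp]
theorem sigmaBlock_mul_blockDiagonal' [∀ i, Fintype (β i)]
    (X : Matrix (Σ i, α i) (Σ j, β j) R) (C : ∀ i, Matrix (β i) (γ i) R) (i j : ι) :
    (X * blockDiagonal' C).sigmaBlock i j = X.sigmaBlock i j * C j := by
  ext a b
  simp [sigmaBlock, mul_apply, Fintype.sum_sigma, blockDiagonal'_apply]

end Matrix

/-- for a block-diagonal pair `(C, D)` under contragredient equivalence,
the versality condition of a simple deformation with parameter positions `ZP` (in the
first matrix) and `ZQ` (in the second) holds globally iff it holds blockwise. -/
theorem versality_condition_decomposes {t : ℕ} (m n : Fin t → ℕ)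
    (C : (i : Fin t) → Matrix (Fin (m i)) (Fin (n i)) ℂ)
    (D : (i : Fin t) → Matrix (Fin (n i)) (Fin (m i)) ℂ)
    (ZP : Set (((i : Fin t) × Fin (m i)) × ((i : Fin t) × Fin (n i))))
    (ZQ : Set (((i : Fin t) × Fin (n i)) × ((i : Fin t) × Fin (m i)))) :
    (∀ (M : Matrix ((i : Fin t) × Fin (m i)) ((i : Fin t) × Fin (n i)) ℂ)
       (N : Matrix ((i : Fin t) × Fin (n i)) ((i : Fin t) × Fin (m i)) ℂ),
       ∃ (S : Matrix ((i : Fin t) × Fin (m i)) ((i : Fin t) × Fin (m i)) ℂ)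
         (R : Matrix ((i : Fin t) × Fin (n i)) ((i : Fin t) × Fin (n i)) ℂ)
         (P : Matrix ((i : Fin t) × Fin (m i)) ((i : Fin t) × Fin (n i)) ℂ)
         (Q : Matrix ((i : Fin t) × Fin (n i)) ((i : Fin t) × Fin (m i)) ℂ),
         (∀ p q, P p q ≠ 0 → (p, q) ∈ ZP) ∧
         (∀ p q, Q p q ≠ 0 → (p, q) ∈ ZQ) ∧
         M + (Matrix.blockDiagonal' C * R - S * Matrix.blockDiagonal' C) = P ∧
         N + (Matrix.blockDiagonal' D * S - R * Matrix.blockDiagonal' D) = Q)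
    ↔
    (∀ (i j : Fin t)
       (Mij : Matrix (Fin (m i)) (Fin (n j)) ℂ)
       (Nij : Matrix (Fin (n i)) (Fin (m j)) ℂ),
       ∃ (Sij : Matrix (Fin (m i)) (Fin (m j)) ℂ)
         (Rij : Matrix (Fin (n i)) (Fin (n j)) ℂ)
         (Pij : Matrix (Fin (m i)) (Fin (n j)) ℂ)
         (Qij : Matrix (Fin (n i)) (Fin (m j)) ℂ),
         (∀ a b, Pij a b ≠ 0 →
           ((⟨i, a⟩ : (i : Fin t) × Fin (m i)), (⟨j, b⟩ : (i : Fin t) × Fin (n i))) ∈ ZP) ∧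
         (∀ a b, Qij a b ≠ 0 →
           ((⟨i, a⟩ : (i : Fin t) × Fin (n i)), (⟨j, b⟩ : (i : Fin t) × Fin (m i))) ∈ ZQ) ∧
         Mij + (C i * Rij - Sij * C j) = Pij ∧
         Nij + (D i * Sij - Rij * D j) = Qij) := by
  constructor
  · intro h i j Mij Nij
    obtain ⟨M, rfl⟩ :=
      exists_sigmaBlock_eq (α := fun k => Fin (m k)) (β := fun l => Fin (n l)) i j Mij
    obtain ⟨N, rfl⟩ :=
      exists_sigmaBlock_eq (α := fun k => Fin (n k)) (β := fun l => Fin (m l)) i j Nij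
    obtain ⟨S, R, P, Q, hP, hQ, hPeq, hQeq⟩ := h M N
    exact ⟨S.sigmaBlock i j, R.sigmaBlock i j, P.sigmaBlock i j, Q.sigmaBlock i j,
      fun a b => hP ⟨i, a⟩ ⟨j, b⟩, fun a b => hQ ⟨i, a⟩ ⟨j, b⟩,
      by simp [← hPeq], by simp [← hQeq]⟩
  · intro h M N
    choose S R P Q hP hQ hPeq hQeq using fun i j => h i j (M.sigmaBlock i j) (N.sigmaBlock i j)
    refine ⟨ofSigmaBlocks S, ofSigmaBlocks R, ofSigmaBlocks P, ofSigmaBlocks Q,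
      fun ⟨i, a⟩ ⟨j, b⟩ => hP i j a b, fun ⟨i, a⟩ ⟨j, b⟩ => hQ i j a b, ?_, ?_⟩
    · exact ext_sigmaBlock fun i j => by simpa using hPeq i j
    · exact ext_sigmaBlock fun i j => by simpa using hQeq i j
end
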